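/- Odd vertices persist to the end of the crushing process. Precisely: define a relation Move on finite multisets of natural numbers by: Move s t holds if and only if there exists an element n of s such that either (split) t = (s.erase n) + m for some finite multiset m of natural numbers with sum n, or (create) t = (s.erase n) + {a+1, b+1} for some natural numbers a, b with a + b = n, or (lose) n ≥ 2 and t = (s.erase n) + {n - 2}. If t is obtained from s by the reflexive-transitive closure of Move and s contains at least one odd element, then t contains at least one odd element. -/

import Mathlib

/-!
A move touches a single element `n`, leaving the rest of the multiset in place, so it suffices
that an odd `n` is always replaced by something containing an odd number: an odd sum has an odd
summand, if `a + b` is odd then one of `a`, `b` is even, and `n - 2` has the parity of `n`.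
-/

/-- The atomic bookkeeping moves on multisets of invalid-edge counts:
(split) replace an element `n` by a multiset `m` with sum `n`;
(create) replace an element `n = a + b` by the two elements `a + 1`, `b + 1`;
(lose) replace an element `n ≥ 2` by `n - 2`. -/
def Move (s t : Multiset ℕ) : Prop :=
  ∃ n ∈ s,
    (∃ m : Multiset ℕ, m.sum = n ∧ t = s.erase n + m) ∨
    (∃ a b : ℕ, a + b = n ∧ t = s.erase n + {a + 1, b + 1}) ∨
    (2 ≤ n ∧ t = s.erase n + {n - 2})

lemma Multiset.exists_mem_erase_add {α : Type*} [DecidableEq α] {p : α → Prop}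
    {s r : Multiset α} {n : α} (hs : ∃ x ∈ s, p x) (hr : p n → ∃ x ∈ r, p x) :
    ∃ x ∈ s.erase n + r, p x := by
  obtain ⟨x, hx, hpx⟩ := hs
  by_cases hxn : x = n
  · obtain ⟨y, hy, hpy⟩ := hr (hxn ▸ hpx)
    exact ⟨y, Multiset.mem_add.2 (.inr hy), hpy⟩
  · exact ⟨x, Multiset.mem_add.2 (.inl ((Multiset.mem_erase_of_ne hxn).2 hx)), hpx⟩

lemma Multiset.exists_odd_of_odd_sum {m : Multiset ℕ} (h : Odd m.sum) : ∃ x ∈ m, Odd x := by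
  by_contra! hm
  exact Nat.not_even_iff_odd.2 h <| Multiset.sum_induction Even m (fun _ _ ↦ Even.add) .zero
    fun x hx ↦ Nat.not_odd_iff_even.1 (hm x hx)

lemma Nat.odd_add_one_or_odd_add_one_of_odd_add {a b : ℕ} (h : Odd (a + b)) :
    Odd (a + 1) ∨ Odd (b + 1) := by
  grind

lemma Move.exists_odd {s t : Multiset ℕ} (h : Move s t) (hs : ∃ n ∈ s, Odd n) :
    ∃ n ∈ t, Odd n := by
  obtain ⟨n, -, ⟨m, rfl, rfl⟩ | ⟨a, b, rfl, rfl⟩ | ⟨h2, rfl⟩⟩ := h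
  · exact Multiset.exists_mem_erase_add hs Multiset.exists_odd_of_odd_sum
  · exact Multiset.exists_mem_erase_add hs fun hab ↦ by
      simpa using Nat.odd_add_one_or_odd_add_one_of_odd_add hab
  · exact Multiset.exists_mem_erase_add hs fun hn ↦
      ⟨n - 2, by simp, Nat.Odd.sub_even h2 hn even_two⟩

/-- Odd vertices persist to the end of the crushing process: if `t` is obtained
from `s` by a finite sequence of atomic bookkeeping moves and `s` contains an
odd element, then `t` contains an odd element. -/
theorem odd_persists_of_reflTransGen_move (s t : Multiset ℕ)
    (h : Relation.ReflTransGen Move s t) (hs : ∃ n ∈ s, Odd n) :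
    ∃ n ∈ t, Odd n := by
  induction h with
  | refl => exact hs
  | tail _ hmove ih => exact hmove.exists_odd ih
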